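/- arXiv:1812.08530 — 9 statements merged into one kernel-verified Lean document; each statement's English description precedes it below -/
import Mathlib

section
/- For every x ∈ A and every k ≥ 0 one has ‖∑_{|μ|=k} s_μ x s_μ^*‖ ≤ ‖x‖, the sum running over all words μ in {1,…,n} of length k. -/
open scoped BigOperators

noncomputable section

variable {A : Type*} [NormedRing A] [StarRing A] [CStarRing A]
  [NormedAlgebra ℂ A] [StarModule ℂ A] [CompleteSpace A]

/-- The product `s_{μ₁} ⋯ s_{μ_k}` associated to a word `μ : Fin k → Fin n`. -/
def sProd {n : ℕ} (s : Fin n → A) {k : ℕ} (μ : Fin k → Fin n) : A :=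
  (List.ofFn fun i => s (μ i)).prod

set_option linter.unusedSectionVars false in
lemma sProd_succ {n k : ℕ} (s : Fin n → A) (μ : Fin (k + 1) → Fin n) :
    sProd s μ = s (μ 0) * sProd s (fun i => μ i.succ) := by
  simp [sProd, List.ofFn_succ]

lemma star_sProd_mul_sProd {n : ℕ} (s : Fin n → A)
    (hs : ∀ i j, star (s i) * s j = if i = j then 1 else 0) {k : ℕ}
    (μ ν : Fin k → Fin n) :
    star (sProd s μ) * sProd s ν = if μ = ν then 1 else 0 := by
  induction k with
  | zero => simp [sProd, Subsingleton.elim μ ν]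
  | succ k ih =>
    rw [sProd_succ, sProd_succ, star_mul]
    by_cases h0 : μ 0 = ν 0
    · have : star (sProd s (fun i => μ i.succ)) * star (s (μ 0)) * (s (ν 0) *
          sProd s (fun i => ν i.succ)) =
          star (sProd s (fun i => μ i.succ)) * sProd s (fun i => ν i.succ) := by
        simp only [mul_assoc]
        rw [← mul_assoc (star (s (μ 0))), hs, if_pos h0, one_mul]
      rw [this, ih]
      congr 1
      simp only [eq_iff_iff]
      constructor
      · intro h
        funext i
        cases i using Fin.cases with
        | zero => exact h0
        | succ i => exact congrFun h i
      · intro h; funext i; exact congrFun h i.succ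
    · have hne : μ ≠ ν := fun h => h0 (congrFun h 0)
      simp only [mul_assoc]
      rw [← mul_assoc (star (s (μ 0))), hs, if_neg h0]
      simp [hne]

/-- `‖∑_{|μ|=k} s_μ x s_μ^*‖ ≤ ‖x‖`. -/
theorem stmt2 {n : ℕ} (s : Fin n → A)
    (hs : ∀ i j, star (s i) * s j = if i = j then 1 else 0) (x : A) (k : ℕ) :
    ‖∑ μ : Fin k → Fin n, sProd s μ * x * star (sProd s μ)‖ ≤ ‖x‖ := by
  letI : CStarAlgebra A := {}
  letI : PartialOrder A := CStarAlgebra.spectralOrder A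
  letI : StarOrderedRing A := CStarAlgebra.spectralOrderedRing A
  have key := star_sProd_mul_sProd s hs (k := k)
  set T : A := ∑ μ : Fin k → Fin n, sProd s μ * x * star (sProd s μ) with hT
  set P : A := ∑ μ : Fin k → Fin n, sProd s μ * star (sProd s μ) with hP
  -- a general collapsing computation
  have collapse : ∀ y z : A,
      (∑ μ : Fin k → Fin n, sProd s μ * y * star (sProd s μ)) *
      (∑ μ : Fin k → Fin n, sProd s μ * z * star (sProd s μ)) =
      ∑ μ : Fin k → Fin n, sProd s μ * (y * z) * star (sProd s μ) := by
    intro y z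
    rw [Finset.sum_mul_sum]
    refine Finset.sum_congr rfl fun μ _ => ?_
    calc ∑ ν : Fin k → Fin n, (sProd s μ * y * star (sProd s μ)) * (sProd s ν * z * star (sProd s ν))
        = ∑ ν : Fin k → Fin n, (if μ = ν then sProd s μ * (y * z) * star (sProd s μ) else 0) := by
          refine Finset.sum_congr rfl fun ν _ => ?_
          by_cases h : μ = ν
          · subst h
            simp only [mul_assoc]
            rw [← mul_assoc (star (sProd s μ)) (sProd s μ), key]
            simp
          · simp only [mul_assoc]
            rw [← mul_assoc (star (sProd s μ)) (sProd s ν), key, if_neg h, if_neg h]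
            simp
      _ = sProd s μ * (y * z) * star (sProd s μ) := by simp
  have hstarT : star T = ∑ μ : Fin k → Fin n, sProd s μ * star x * star (sProd s μ) := by
    rw [hT, star_sum]
    exact Finset.sum_congr rfl fun μ _ => by simp [star_mul, mul_assoc]
  have hTT : star T * T = ∑ μ : Fin k → Fin n, sProd s μ * (star x * x) * star (sProd s μ) := by
    rw [hstarT, hT, collapse]
  have hpos : (0 : A) ≤ ∑ μ : Fin k → Fin n, sProd s μ * (star x * x) * star (sProd s μ) := by
    refine Finset.sum_nonneg fun μ _ => ?_
    have : sProd s μ * (star x * x) * star (sProd s μ) =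
        star (x * star (sProd s μ)) * (x * star (sProd s μ)) := by
      simp [star_mul, mul_assoc]
    rw [this]
    exact star_mul_self_nonneg _
  have hle : (∑ μ : Fin k → Fin n, sProd s μ * (star x * x) * star (sProd s μ)) ≤
      ‖star x * x‖ • P := by
    rw [hP, Finset.smul_sum]
    refine Finset.sum_le_sum fun μ _ => ?_
    have h := CStarAlgebra.star_left_conjugate_le_norm_smul (a := star (sProd s μ)) (b := star x * x)
      (IsSelfAdjoint.star_mul_self x)
    simpa using h
  -- P is a projection
  have hstarP : star P = P := by
    rw [hP, star_sum]
    exact Finset.sum_congr rfl fun μ _ => by simp [star_mul]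
  have hPP : P * P = P := by
    have := collapse 1 1
    simpa [hP] using this
  have hnormP : ‖P‖ ≤ 1 := by
    have h1 : ‖star P * P‖ = ‖P‖ * ‖P‖ := CStarRing.norm_star_mul_self
    rw [hstarP, hPP] at h1
    nlinarith [norm_nonneg P]
  have h2 : ‖T‖ * ‖T‖ = ‖star T * T‖ := CStarRing.norm_star_mul_self.symm
  have h3 : ‖star T * T‖ ≤ ‖x‖ * ‖x‖ := by
    rw [hTT]
    calc ‖∑ μ : Fin k → Fin n, sProd s μ * (star x * x) * star (sProd s μ)‖
        ≤ ‖(‖star x * x‖ : ℝ) • P‖ := CStarAlgebra.norm_le_norm_of_nonneg_of_le hpos hle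
      _ = ‖star x * x‖ * ‖P‖ := by
          rw [norm_smul]; simp
      _ ≤ ‖star x * x‖ * 1 := by
          exact mul_le_mul_of_nonneg_left hnormP (norm_nonneg _)
      _ = ‖x‖ * ‖x‖ := by rw [mul_one, CStarRing.norm_star_mul_self]
  nlinarith [norm_nonneg T, norm_nonneg x]
end
end

section
/- The elements t̃_r := (1−Q)t_r satisfy: s_i^* t̃_l = 0 for all 1 ≤ i ≤ n, 1 ≤ l ≤ m; t̃_r^* t̃_l = 0 for r ≠ l; and t̃_r^* t̃_r = 1 − |q|²·Q for every 1 ≤ r ≤ m. -/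
open scoped BigOperators

noncomputable section

variable {A : Type*} [NormedRing A] [StarRing A] [CStarRing A]
  [NormedAlgebra ℂ A] [StarModule ℂ A] [CompleteSpace A]

/-- the elements `t̃_r := (1 − Q) t_r` satisfy `s_i^* t̃_l = 0`,
`t̃_r^* t̃_l = 0` for `r ≠ l`, and `t̃_r^* t̃_r = 1 − |q|² Q`. -/
theorem stmt3 {n m : ℕ} (q : ℂ) (s : Fin n → A) (t : Fin m → A)
    (hs : ∀ i j, star (s i) * s j = if i = j then 1 else 0)
    (ht : ∀ r l, star (t r) * t l = if r = l then 1 else 0)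
    (hst : ∀ j r, star (s j) * t r = q • (t r * star (s j)))
    (Q : A) (hQ : Q = ∑ i : Fin n, s i * star (s i))
    (tt : Fin m → A) (htt : ∀ r, tt r = (1 - Q) * t r) :
    (∀ i l, star (s i) * tt l = 0) ∧
    (∀ r l, r ≠ l → star (tt r) * tt l = 0) ∧
    (∀ r, star (tt r) * tt r = 1 - (‖q‖ : ℂ) ^ 2 • Q) := by
  have hts : ∀ r j, star (t r) * s j = (starRingEnd ℂ q) • (s j * star (t r)) := by
    intro r j
    have := congrArg star (hst j r)
    simpa [star_mul, star_smul, mul_comm] using this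
  have hQstar : star Q = Q := by
    rw [hQ, star_sum]
    simp [star_mul]
  have hsQ : ∀ i, star (s i) * Q = star (s i) := by
    intro i
    rw [hQ, Finset.mul_sum]
    have h : ∀ j : Fin n, star (s i) * (s j * star (s j))
        = if i = j then star (s j) else 0 := by
      intro j
      rw [← mul_assoc, hs i j]
      split <;> simp
    rw [Finset.sum_congr rfl fun j _ => h j, Finset.sum_ite_eq]
    simp
  have hQQ : Q * Q = Q := by
    nth_rewrite 1 [hQ]
    rw [Finset.sum_mul]
    calc ∑ i : Fin n, s i * star (s i) * Q
        = ∑ i : Fin n, s i * star (s i) := by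
          refine Finset.sum_congr rfl fun i _ => ?_
          rw [mul_assoc, hsQ]
      _ = Q := hQ.symm
  have h1 : ∀ i l, star (s i) * tt l = 0 := by
    intro i l
    rw [htt, ← mul_assoc, mul_one_sub, hsQ, sub_self, zero_mul]
  have htQt : ∀ r l, star (t r) * (Q * t l)
      = ((starRingEnd ℂ q) * q) • (if r = l then Q else 0) := by
    intro r l
    rw [hQ, Finset.sum_mul, Finset.mul_sum]
    have h : ∀ i : Fin n, star (t r) * (s i * star (s i) * t l)
        = ((starRingEnd ℂ q) * q) • (if r = l then s i * star (s i) else 0) := by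
      intro i
      rw [mul_assoc (s i), ← mul_assoc (star (t r)), hts r i, hst i l]
      rw [smul_mul_assoc, mul_smul_comm, smul_smul]
      congr 1
      rw [mul_assoc, ← mul_assoc (star (t r)), ht r l]
      split <;> simp [mul_assoc]
    rw [Finset.sum_congr rfl fun i _ => h i, ← Finset.smul_sum]
    by_cases hrl : r = l <;> simp [hrl, Finset.sum_ite_eq]
  have hproj : (1 - Q) * (1 - Q) = 1 - Q := by
    rw [mul_one_sub, one_sub_mul, hQQ, sub_self, sub_zero]
  have key : ∀ r l, star (tt r) * tt l
      = (if r = l then 1 else 0) - ((starRingEnd ℂ q) * q) • (if r = l then Q else 0) := by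
    intro r l
    rw [htt r, htt l, star_mul, star_sub, star_one, hQstar, mul_assoc,
      ← mul_assoc (1 - Q), hproj, one_sub_mul, mul_sub, ht r l, htQt r l]
  refine ⟨h1, fun r l hrl => by simpa [hrl] using key r l, fun r => ?_⟩
  have h := key r r
  rw [if_pos rfl, if_pos rfl] at h
  rw [h]
  congr 2
  simpa using RCLike.conj_mul q
end
end

section
/- For every N ≥ 0 and every 1 ≤ r ≤ m, ∑_{k=0}^{N} ∑_{|μ|=k} q^k s_μ t̃_r s_μ^* = t_r − q^{N+1} ∑_{|μ|=N+1} s_μ t_r s_μ^*, where t̃_r := (1−Q)t_r and the inner sums run over words μ in {1,…,n} of the indicated length. -/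
open scoped BigOperators

noncomputable section

variable {A : Type*} [NormedRing A] [StarRing A] [CStarRing A]
  [NormedAlgebra ℂ A] [StarModule ℂ A] [CompleteSpace A]

set_option linter.unusedSectionVars false in
lemma sProd_snoc {n k : ℕ} (s : Fin n → A) (μ : Fin k → Fin n) (i : Fin n) :
    sProd s (Fin.snoc μ i) = sProd s μ * s i := by
  unfold sProd
  rw [List.ofFn_succ']
  simp [List.concat_eq_append]

/-- the partial sums identity
`∑_{k=0}^{N} ∑_{|μ|=k} q^k s_μ t̃_r s_μ^* = t_r − q^{N+1} ∑_{|μ|=N+1} s_μ t_r s_μ^*`. -/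
theorem stmt4 {n m : ℕ} (q : ℂ) (s : Fin n → A) (t : Fin m → A)
    (hs : ∀ i j, star (s i) * s j = if i = j then 1 else 0)
    (ht : ∀ r l, star (t r) * t l = if r = l then 1 else 0)
    (hst : ∀ j r, star (s j) * t r = q • (t r * star (s j)))
    (Q : A) (hQ : Q = ∑ i : Fin n, s i * star (s i))
    (tt : Fin m → A) (htt : ∀ r, tt r = (1 - Q) * t r)
    (N : ℕ) (r : Fin m) :
    ∑ k ∈ Finset.range (N + 1), ∑ μ : Fin k → Fin n,
        q ^ k • (sProd s μ * tt r * star (sProd s μ))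
      = t r - q ^ (N + 1) •
          ∑ μ : Fin (N + 1) → Fin n, sProd s μ * t r * star (sProd s μ) := by
  have hQt : Q * t r = q • ∑ i : Fin n, s i * t r * star (s i) := by
    rw [hQ, Finset.sum_mul, Finset.smul_sum]
    congr 1
    ext i
    rw [mul_assoc, hst i r, mul_smul_comm, mul_assoc]
  have hTsucc : ∀ k : ℕ,
      (∑ ν : Fin (k + 1) → Fin n, sProd s ν * t r * star (sProd s ν))
      = ∑ μ : Fin k → Fin n, ∑ i : Fin n,
          (sProd s μ * s i) * t r * (star (s i) * star (sProd s μ)) := by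
    intro k
    rw [← Fintype.sum_equiv
      (⟨fun p => Fin.snoc p.1 p.2, fun f => (Fin.init f, f (Fin.last k)),
        fun p => by simp, fun f => by simp⟩ :
        (Fin k → Fin n) × Fin n ≃ (Fin (k + 1) → Fin n))
      (fun p => (sProd s p.1 * s p.2) * t r * (star (s p.2) * star (sProd s p.1)))
      (fun ν => sProd s ν * t r * star (sProd s ν))
      (fun p => by simp only [Equiv.coe_fn_mk]; rw [sProd_snoc, star_mul]),
      Fintype.sum_prod_type]
  have key : ∀ k : ℕ, (∑ μ : Fin k → Fin n,
      q ^ k • (sProd s μ * tt r * star (sProd s μ)))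
      = q ^ k • (∑ μ : Fin k → Fin n, sProd s μ * t r * star (sProd s μ))
        - q ^ (k + 1) • (∑ ν : Fin (k + 1) → Fin n, sProd s ν * t r * star (sProd s ν)) := by
    intro k
    have step : ∀ μ : Fin k → Fin n,
        sProd s μ * tt r * star (sProd s μ)
          = sProd s μ * t r * star (sProd s μ)
            - q • ∑ i : Fin n, (sProd s μ * s i) * t r * (star (s i) * star (sProd s μ)) := by
      intro μ
      rw [htt, sub_mul, one_mul, mul_sub, sub_mul, mul_assoc (sProd s μ), hQt]
      congr 1
      rw [mul_smul_comm, smul_mul_assoc]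
      congr 1
      rw [Finset.mul_sum, Finset.sum_mul]
      exact Finset.sum_congr rfl fun i _ => by simp [mul_assoc]
    calc (∑ μ : Fin k → Fin n, q ^ k • (sProd s μ * tt r * star (sProd s μ)))
        = ∑ μ : Fin k → Fin n, (q ^ k • (sProd s μ * t r * star (sProd s μ))
            - q ^ (k+1) • ∑ i : Fin n,
              (sProd s μ * s i) * t r * (star (s i) * star (sProd s μ))) := by
          refine Finset.sum_congr rfl fun μ _ => ?_
          rw [step μ, smul_sub, smul_smul, ← pow_succ]
      _ = _ := by
          rw [Finset.sum_sub_distrib, ← Finset.smul_sum, ← Finset.smul_sum,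
            hTsucc k, Finset.smul_sum]
  calc (∑ k ∈ Finset.range (N + 1), ∑ μ : Fin k → Fin n,
        q ^ k • (sProd s μ * tt r * star (sProd s μ)))
      = ∑ k ∈ Finset.range (N + 1),
          ((fun k => q ^ k • ∑ μ : Fin k → Fin n,
              sProd s μ * t r * star (sProd s μ)) k
           - (fun k => q ^ k • ∑ μ : Fin k → Fin n,
              sProd s μ * t r * star (sProd s μ)) (k + 1)) :=
        Finset.sum_congr rfl fun k _ => key k
    _ = (fun k => q ^ k • ∑ μ : Fin k → Fin n,
          sProd s μ * t r * star (sProd s μ)) 0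
        - (fun k => q ^ k • ∑ μ : Fin k → Fin n,
          sProd s μ * t r * star (sProd s μ)) (N + 1) :=
        Finset.sum_range_sub' _ _
    _ = t r - q ^ (N + 1) •
          ∑ μ : Fin (N + 1) → Fin n, sProd s μ * t r * star (sProd s μ) := by
        simp [sProd]
end
end

section
/- Assume |q| < 1 and set t̂_r := (1−Q)·t_r·(1−|q|²Q)^{−1/2}, where (1−|q|²Q)^{−1/2} denotes the inverse of the unique positive square root of the positive invertible element 1−|q|²Q. Then the family {s_i, t̂_r} satisfies s_i^* s_j = δ_{ij}·1, t̂_r^* t̂_l = δ_{rl}·1, and s_i^* t̂_r = 0 for all 1 ≤ i,j ≤ n and 1 ≤ r,l ≤ m. -/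
open scoped BigOperators

noncomputable section

variable {A : Type*} [NormedRing A] [StarRing A] [CStarRing A]
  [NormedAlgebra ℂ A] [StarModule ℂ A] [CompleteSpace A]
  [PartialOrder A] [StarOrderedRing A]

/-- with `t̂_r := (1−Q) t_r (1−|q|²Q)^{−1/2}` (where `c` is the
unique positive square root of `1−|q|²Q` and `d` its inverse), the family
`{s_i, t̂_r}` satisfies `s_i^* s_j = δ_{ij}`, `t̂_r^* t̂_l = δ_{rl}`, `s_i^* t̂_r = 0`. -/
theorem stmt7 {n m : ℕ} (q : ℂ) (hq : ‖q‖ < 1) (s : Fin n → A) (t : Fin m → A)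
    (hs : ∀ i j, star (s i) * s j = if i = j then 1 else 0)
    (ht : ∀ r l, star (t r) * t l = if r = l then 1 else 0)
    (hst : ∀ j r, star (s j) * t r = q • (t r * star (s j)))
    (Q : A) (hQ : Q = ∑ i : Fin n, s i * star (s i))
    (c : A) (hc_pos : 0 ≤ c) (hc_sq : c * c = 1 - (‖q‖ : ℂ) ^ 2 • Q)
    (d : A) (hcd : c * d = 1) (hdc : d * c = 1)
    (th : Fin m → A) (hth : ∀ r, th r = (1 - Q) * t r * d) :
    (∀ i j, star (s i) * s j = if i = j then 1 else 0) ∧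
    (∀ r l, star (th r) * th l = if r = l then 1 else 0) ∧
    (∀ i r, star (s i) * th r = 0) := by
  -- Q is self-adjoint and idempotent
  have hQsa : star Q = Q := by
    rw [hQ, star_sum]
    exact Finset.sum_congr rfl fun i _ => by rw [star_mul, star_star]
  have hsQ : ∀ i, star (s i) * Q = star (s i) := by
    intro i
    rw [hQ, Finset.mul_sum]
    have : ∀ j ∈ Finset.univ, star (s i) * (s j * star (s j))
        = if i = j then star (s j) else 0 := by
      intro j _
      rw [← mul_assoc, hs]
      split <;> simp_all
    rw [Finset.sum_congr rfl this]
    simp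
  have hQQ : Q * Q = Q := by
    nth_rewrite 1 [hQ]
    rw [Finset.sum_mul]
    rw [Finset.sum_congr rfl fun i _ => by rw [mul_assoc, hsQ]]
    rw [← hQ]
  have h1Q : (1 - Q) * (1 - Q) = 1 - Q := by
    rw [sub_mul, mul_sub, mul_sub, hQQ]; simp
  -- star d = d
  have hcsa : star c = c := (IsSelfAdjoint.of_nonneg hc_pos)
  have hdsa : star d = d := by
    have h1 : star d * c = 1 := by
      rw [← hcsa, ← star_mul, hcd, star_one]
    calc star d = star d * (c * d) := by rw [hcd, mul_one]
    _ = (star d * c) * d := by rw [mul_assoc]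
    _ = d := by rw [h1, one_mul]
  -- adjoint commutation
  have hts : ∀ r j, star (t r) * s j = (starRingEnd ℂ q) • (s j * star (t r)) := by
    intro r j
    have := congrArg star (hst j r)
    simpa [star_mul, star_smul, mul_comm] using this
  -- scalar identity
  have hnorm : (‖q‖ : ℂ) ^ 2 = q * (starRingEnd ℂ) q := by
    rw [Complex.mul_conj']
  -- key: t_r^* (1-Q) t_l
  have hQt : ∀ l, Q * t l = q • ∑ i : Fin n, s i * (t l * star (s i)) := by
    intro l
    rw [hQ, Finset.sum_mul, Finset.smul_sum]
    exact Finset.sum_congr rfl fun i _ => by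
      rw [mul_assoc, hst, mul_smul_comm]
  have key : ∀ r l, star (t r) * ((1 - Q) * t l) = if r = l then c * c else 0 := by
    intro r l
    have h2 : star (t r) * (Q * t l) = (‖q‖ : ℂ) ^ 2 • (if r = l then Q else 0) := by
      rw [hQt, mul_smul_comm, Finset.mul_sum]
      have : ∀ i ∈ Finset.univ, star (t r) * (s i * (t l * star (s i)))
          = (starRingEnd ℂ q) • ((if r = l then 1 else 0) * (s i * star (s i))) := by
        intro i _
        calc star (t r) * (s i * (t l * star (s i)))
            = (star (t r) * s i) * (t l * star (s i)) := by rw [mul_assoc]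
          _ = (starRingEnd ℂ q) • ((s i * star (t r)) * (t l * star (s i))) := by
              rw [hts, smul_mul_assoc]
          _ = (starRingEnd ℂ q) • (s i * (star (t r) * t l) * star (s i)) := by
              rw [mul_assoc, mul_assoc, mul_assoc]
          _ = (starRingEnd ℂ q) • ((if r = l then 1 else 0) * (s i * star (s i))) := by
              rw [ht]
              split <;> simp [mul_assoc]
      rw [Finset.sum_congr rfl this, ← Finset.smul_sum, ← Finset.mul_sum, smul_smul, hnorm]
      split <;> simp [hQ]
    rw [sub_mul, one_mul, mul_sub, ht, h2, hc_sq]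
    split <;> simp
  refine ⟨hs, fun r l => ?_, fun i r => ?_⟩
  · rw [hth, hth, star_mul, star_mul, star_sub, star_one, hQsa, hdsa]
    calc d * (star (t r) * (1 - Q)) * ((1 - Q) * t l * d)
        = d * (star (t r) * ((1 - Q) * ((1 - Q) * t l))) * d := by
          noncomm_ring
      _ = d * (star (t r) * ((1 - Q) * t l)) * d := by
          rw [← mul_assoc (1 - Q), h1Q]
      _ = if r = l then 1 else 0 := by
          rw [key]
          split
          · calc d * (c * c) * d = (d * c) * (c * d) := by noncomm_ring
              _ = 1 := by rw [hdc, hcd, one_mul]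
          · simp
  · rw [hth, ← mul_assoc, ← mul_assoc, mul_sub, mul_one, hsQ, sub_self, zero_mul, zero_mul]
end
end

section
/- Assume |q| < 1 and let w_r := ∑_{k=0}^{∞} ∑_{|μ|=k} q^k v_μ w̃_r v_μ^* (the series converging in norm). Then (1 − Q̃)·w_r = w̃_r for every 1 ≤ r ≤ m. -/
open scoped BigOperators

noncomputable section

variable {A : Type*} [NormedRing A] [StarRing A] [CStarRing A]
  [NormedAlgebra ℂ A] [StarModule ℂ A] [CompleteSpace A]
  [PartialOrder A] [StarOrderedRing A]

/-- with `w_r` the (norm-convergent) sum of the series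
`∑_{k≥0} ∑_{|μ|=k} q^k v_μ w̃_r v_μ^*`, one has `(1 − Q̃) w_r = w̃_r`. -/
theorem stmt9 {n m : ℕ} (q : ℂ) (hq : ‖q‖ < 1) (v : Fin (n + m) → A)
    (hv : ∀ i j, star (v i) * v j = if i = j then 1 else 0)
    (Q : A) (hQ : Q = ∑ i : Fin n, v (Fin.castAdd m i) * star (v (Fin.castAdd m i)))
    (c : A) (hc_pos : 0 ≤ c) (hc_sq : c * c = 1 - (‖q‖ : ℂ) ^ 2 • Q)
    (wt : Fin m → A) (hwt : ∀ r, wt r = v (Fin.natAdd n r) * c)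
    (w : Fin m → A)
    (hw : ∀ r, Filter.Tendsto
      (fun N : ℕ => ∑ k ∈ Finset.range N, ∑ μ : Fin k → Fin n,
        q ^ k • (sProd (fun i => v (Fin.castAdd m i)) μ * wt r *
          star (sProd (fun i => v (Fin.castAdd m i)) μ)))
      Filter.atTop (nhds (w r)))
    (r : Fin m) :
    (1 - Q) * w r = wt r := by
  set u : Fin n → A := fun i => v (Fin.castAdd m i) with hu
  -- Q * u j = u j
  have hQu : ∀ j : Fin n, Q * u j = u j := by
    intro j
    rw [hQ, Finset.sum_mul]
    have h1 : ∀ i : Fin n, u i * star (u i) * u j = if i = j then u j else 0 := by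
      intro i
      rw [mul_assoc, hv]
      by_cases h : i = j
      · simp [h]
      · have : Fin.castAdd m i ≠ Fin.castAdd m j := fun hh => h (Fin.castAdd_inj.mp hh)
        simp [this, h]
    change ∑ i : Fin n, u i * star (u i) * u j = u j
    simp only [h1]
    simp
  -- Q * wt r = 0
  have hQwt : Q * wt r = 0 := by
    rw [hQ, hwt, Finset.sum_mul]
    apply Finset.sum_eq_zero
    intro i _
    have hne : Fin.castAdd m i ≠ Fin.natAdd n r := by
      simp [Fin.ext_iff]
      omega
    rw [mul_assoc, ← mul_assoc (star (v (Fin.castAdd m i))), hv, if_neg hne,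
      zero_mul, mul_zero]
  -- Q * (sProd u μ * X) = sProd u μ * X for |μ| = k+1
  have hQprod : ∀ (k : ℕ) (μ : Fin (k+1) → Fin n) (X : A),
      Q * (sProd u μ * X) = sProd u μ * X := by
    intro k μ X
    have : sProd u μ = u (μ 0) * sProd u (fun i => μ i.succ) := by
      simp [sProd, List.ofFn_succ]
    rw [this, mul_assoc, ← mul_assoc Q, hQu]
  -- (1 - Q) * partial sum = wt r for N ≥ 1
  have hpart : ∀ N : ℕ, 1 ≤ N →
      (1 - Q) * (∑ k ∈ Finset.range N, ∑ μ : Fin k → Fin n,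
        q ^ k • (sProd u μ * wt r * star (sProd u μ))) = wt r := by
    intro N hN
    rw [Finset.mul_sum]
    have hterm : ∀ k : ℕ, (1 - Q) * (∑ μ : Fin k → Fin n,
        q ^ k • (sProd u μ * wt r * star (sProd u μ))) =
        if k = 0 then wt r else 0 := by
      intro k
      match k with
      | 0 =>
        simp only [if_pos rfl]
        rw [Finset.sum_unique_nonempty _ _ Finset.univ_nonempty]
        simp only [pow_zero, one_smul]
        have : sProd u (default : Fin 0 → Fin n) = 1 := by simp [sProd]
        rw [this, one_mul, star_one, mul_one, sub_mul, one_mul, hQwt, sub_zero]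
        simp
      | (k+1) =>
        simp only [Nat.succ_ne_zero, if_false]
        rw [Finset.mul_sum]
        apply Finset.sum_eq_zero
        intro μ _
        rw [mul_smul_comm, sub_mul, one_mul, mul_assoc, hQprod k μ]
        simp
    simp only [hterm]
    rw [Finset.sum_ite_eq' (Finset.range N) 0 (fun _ => wt r)]
    simp [Finset.mem_range, Nat.lt_of_lt_of_le Nat.zero_lt_one hN]
  -- limit argument
  have h1 : Filter.Tendsto (fun N : ℕ => (1 - Q) * (∑ k ∈ Finset.range N,
      ∑ μ : Fin k → Fin n, q ^ k • (sProd u μ * wt r * star (sProd u μ))))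
      Filter.atTop (nhds ((1 - Q) * w r)) := (hw r).const_mul _
  have h2 : Filter.Tendsto (fun _ : ℕ => wt r) Filter.atTop (nhds (wt r)) :=
    tendsto_const_nhds
  have heq : (fun N : ℕ => (1 - Q) * (∑ k ∈ Finset.range N,
      ∑ μ : Fin k → Fin n, q ^ k • (sProd u μ * wt r * star (sProd u μ)))) =ᶠ[Filter.atTop]
      fun _ : ℕ => wt r := by
    filter_upwards [Filter.eventually_ge_atTop 1] with N hN using hpart N hN
  exact tendsto_nhds_unique (h1.congr' heq) h2
end
end

section
/- Assume |q| = 1. If s, t ∈ A satisfy s^* s = 1, t^* t = 1, and s^* t = q·t s^*, then t s = q·s t. (Proof idea: the element B = t s − q·s t satisfies B^* B = 0.) -/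
noncomputable section

variable {A : Type*} [NormedRing A] [StarRing A] [CStarRing A]
  [NormedAlgebra ℂ A] [StarModule ℂ A] [CompleteSpace A]

/-- if `|q| = 1` and `s, t` are isometries with `s^* t = q t s^*`,
then `t s = q s t`. -/
theorem stmt11 (q : ℂ) (hq : ‖q‖ = 1) (s t : A)
    (hs : star s * s = 1) (ht : star t * t = 1)
    (hst : star s * t = q • (t * star s)) :
    t * s = q • (s * t) := by
  have _ := ‹CompleteSpace A›
  have hconj : (starRingEnd ℂ) q * q = 1 := by
    rw [mul_comm, Complex.mul_conj]
    norm_cast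
    rw [Complex.normSq_eq_norm_sq, hq]; norm_num
  have hst' : star t * s = (starRingEnd ℂ) q • (s * star t) := by
    have := congrArg star hst
    simpa [star_smul, star_mul] using this
  have hA : star s * star t * (t * s) = 1 := by
    rw [mul_assoc, ← mul_assoc (star t), ht, one_mul, hs]
  have hD : star t * star s * (s * t) = 1 := by
    rw [mul_assoc, ← mul_assoc (star s), hs, one_mul, ht]
  have hB : star s * star t * (s * t) = (starRingEnd ℂ) q • (1:A) := by
    rw [mul_assoc, ← mul_assoc (star t), hst', smul_mul_assoc, mul_smul_comm,
      mul_assoc s, ht, mul_one, hs]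
  have hC : star t * star s * (t * s) = q • (1:A) := by
    rw [mul_assoc, ← mul_assoc (star s), hst, smul_mul_assoc, mul_smul_comm,
      mul_assoc t, hs, mul_one, ht]
  have key : star (t * s - q • (s * t)) * (t * s - q • (s * t)) = 0 := by
    simp only [star_sub, star_smul, star_mul, sub_mul, mul_sub, smul_mul_assoc,
      mul_smul_comm, smul_smul, star_star]
    rw [hA, hB, hC, hD]
    simp only [Complex.star_def, smul_sub, smul_smul, mul_comm q ((starRingEnd ℂ) q), hconj]
    module
  have : t * s - q • (s * t) = 0 := by
    rwa [CStarRing.star_mul_self_eq_zero_iff] at key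
  exact sub_eq_zero.mp this
end
end

section
/- Let n, m ≥ 1 and q ∈ ℂ with |q| = 1. There exist a nontrivial complex Hilbert space H, bounded operators S_1,…,S_n, T_1,…,T_m on H, and a unit vector Ω ∈ H such that: S_i^* S_j = δ_{ij}·I, T_r^* T_l = δ_{rl}·I, S_j^* T_r = q·T_r S_j^*, T_r S_j = q·S_j T_r for all indices, and S_j^* Ω = 0, T_r^* Ω = 0 for all j, r. -/
noncomputable section

open scoped ComplexConjugate
open Function
open scoped ENNReal

namespace Stmt14Aux

variable {ι : Type}

abbrev ℓ2 (ι : Type) : Type := lp (fun _ : ι => ℂ) 2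

structure ShiftData (ι : Type) where
  f : ι → ι
  g : ι → Option ι
  c : ι → ℂ
  hgf : ∀ i, g (f i) = some i
  hfg : ∀ j i, g j = some i → f i = j
  hc : ∀ i, ‖c i‖ = 1

namespace ShiftData

variable (d : ShiftData ι)

theorem finj : Injective d.f := fun i i' h => by
  have := d.hgf i
  rw [h, d.hgf i'] at this
  exact (Option.some_injective _ this).symm

def shiftFun (x : ι → ℂ) : ι → ℂ := fun j => (d.g j).elim 0 fun i => d.c i * x i

theorem shiftFun_f (x : ι → ℂ) (i : ι) : d.shiftFun x (d.f i) = d.c i * x i := by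
  simp [shiftFun, d.hgf i]

theorem shiftFun_nr (x : ι → ℂ) {j : ι} (hj : j ∉ Set.range d.f) :
    d.shiftFun x j = 0 := by
  unfold shiftFun
  rcases h : d.g j with _ | i
  · rfl
  · exact absurd ⟨i, d.hfg j i h⟩ hj

theorem htwo : (0:ℝ) < (2 : ℝ≥0∞).toReal := by norm_num

theorem support_sub (x : ι → ℂ) :
    support (fun j => ‖d.shiftFun x j‖ ^ (2:ℝ≥0∞).toReal) ⊆ Set.range d.f := by
  intro j hj
  by_contra h
  apply hj
  simp [d.shiftFun_nr x h, Real.zero_rpow htwo.ne']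

theorem zero_off (x : ι → ℂ) :
    ∀ j ∉ Set.range d.f, ‖d.shiftFun x j‖ ^ (2:ℝ≥0∞).toReal = 0 := fun j hj => by
  simp [d.shiftFun_nr x hj, Real.zero_rpow htwo.ne']

theorem comp_eq (x : ι → ℂ) (i : ι) :
    ‖d.shiftFun x (d.f i)‖ ^ (2:ℝ≥0∞).toReal = ‖x i‖ ^ (2:ℝ≥0∞).toReal := by
  rw [d.shiftFun_f, norm_mul, d.hc, one_mul]

theorem memℓp_shift (x : ℓ2 ι) : Memℓp (d.shiftFun x) 2 := by
  apply memℓp_gen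
  rw [← d.finj.summable_iff (d.zero_off x)]
  have : (fun j => ‖d.shiftFun x j‖ ^ (2:ℝ≥0∞).toReal) ∘ d.f
      = fun i => ‖x i‖ ^ (2:ℝ≥0∞).toReal := funext fun i => d.comp_eq x i
  rw [this]
  exact (memℓp_gen_iff htwo).1 (lp.memℓp x)

def shiftLM : ℓ2 ι →ₗ[ℂ] ℓ2 ι where
  toFun x := ⟨d.shiftFun x, d.memℓp_shift x⟩
  map_add' x y := by
    apply lp.ext
    funext j
    show d.shiftFun (x + y) j = d.shiftFun x j + d.shiftFun y j
    unfold shiftFun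
    rcases d.g j with _ | i
    · simp
    · simp [lp.coeFn_add, mul_add]
  map_smul' a x := by
    apply lp.ext
    funext j
    show d.shiftFun (a • x) j = a • d.shiftFun x j
    unfold shiftFun
    rcases d.g j with _ | i
    · simp
    · simp [lp.coeFn_smul]
      ring

theorem norm_shiftLM (x : ℓ2 ι) : ‖d.shiftLM x‖ = ‖x‖ := by
  refine Real.rpow_left_injOn htwo.ne' (norm_nonneg (d.shiftLM x)) (norm_nonneg x) ?_
  show ‖d.shiftLM x‖ ^ (2:ℝ≥0∞).toReal = ‖x‖ ^ (2:ℝ≥0∞).toReal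
  rw [lp.norm_rpow_eq_tsum htwo, lp.norm_rpow_eq_tsum htwo]
  simp only [show (↑(d.shiftLM x) : ι → ℂ) = d.shiftFun x from rfl]
  rw [← d.finj.tsum_eq (d.support_sub x)]
  exact tsum_congr fun i => d.comp_eq x i

def shiftCLM : ℓ2 ι →L[ℂ] ℓ2 ι :=
  LinearIsometry.toContinuousLinearMap ⟨d.shiftLM, d.norm_shiftLM⟩

theorem shiftCLM_apply (x : ℓ2 ι) (j : ι) :
    d.shiftCLM x j = (d.g j).elim 0 fun i => d.c i * x i := rfl

def coFun (x : ι → ℂ) : ι → ℂ := fun i => conj (d.c i) * x (d.f i)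

theorem memℓp_co (x : ℓ2 ι) : Memℓp (d.coFun x) 2 := by
  apply memℓp_gen
  have : (fun i => ‖d.coFun x i‖ ^ (2:ℝ≥0∞).toReal)
      = (fun j => ‖x j‖ ^ (2:ℝ≥0∞).toReal) ∘ d.f := by
    funext i
    simp [coFun, norm_mul, d.hc]
  rw [this]
  exact ((memℓp_gen_iff htwo).1 (lp.memℓp x)).comp_injective d.finj

def coLM : ℓ2 ι →ₗ[ℂ] ℓ2 ι where
  toFun x := ⟨d.coFun x, d.memℓp_co x⟩
  map_add' x y := by
    apply lp.ext
    funext i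
    show d.coFun (x + y) i = d.coFun x i + d.coFun y i
    simp [coFun, lp.coeFn_add, mul_add]
  map_smul' a x := by
    apply lp.ext
    funext i
    show d.coFun (a • x) i = a • d.coFun x i
    simp [coFun, lp.coeFn_smul]
    ring

theorem coLM_apply (x : ℓ2 ι) (i : ι) : d.coLM x i = conj (d.c i) * x (d.f i) := rfl

theorem norm_coLM (x : ℓ2 ι) : ‖d.coLM x‖ ≤ 1 * ‖x‖ := by
  rw [one_mul, ← Real.rpow_le_rpow_iff (norm_nonneg (d.coLM x)) (norm_nonneg x) htwo,
    lp.norm_rpow_eq_tsum htwo, lp.norm_rpow_eq_tsum htwo]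
  have hsum : Summable fun j => ‖x j‖ ^ (2:ℝ≥0∞).toReal :=
    (memℓp_gen_iff htwo).1 (lp.memℓp x)
  have h1 : ∀ i, ‖d.coLM x i‖ ^ (2:ℝ≥0∞).toReal ≤ ‖x (d.f i)‖ ^ (2:ℝ≥0∞).toReal := by
    intro i
    rw [d.coLM_apply, norm_mul, RCLike.norm_conj, d.hc, one_mul]
  exact Summable.tsum_le_tsum_of_inj d.f d.finj (fun j _ => by positivity) h1
    ((memℓp_gen_iff htwo).1 (lp.memℓp (d.coLM x))) hsum

def coCLM : ℓ2 ι →L[ℂ] ℓ2 ι := LinearMap.mkContinuous d.coLM 1 d.norm_coLM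

theorem star_shiftCLM : star d.shiftCLM = d.coCLM := by
  rw [ContinuousLinearMap.star_eq_adjoint]
  symm
  rw [ContinuousLinearMap.eq_adjoint_iff]
  intro x y
  rw [lp.inner_eq_tsum, lp.inner_eq_tsum]
  have hsupp : support (fun j => (inner ℂ (x j) (d.shiftCLM y j) : ℂ)) ⊆ Set.range d.f := by
    intro j hj
    by_contra h
    apply hj
    have : d.shiftCLM y j = 0 := d.shiftFun_nr y h
    simp [this]
  rw [← d.finj.tsum_eq hsupp]
  refine tsum_congr fun i => ?_
  show (inner ℂ (d.coCLM x i) (y i) : ℂ) = inner ℂ (x (d.f i)) (d.shiftCLM y (d.f i))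
  have h1 : d.coCLM x i = conj (d.c i) * x (d.f i) := rfl
  have h2 : d.shiftCLM y (d.f i) = d.c i * y i := d.shiftFun_f y i
  rw [h1, h2, RCLike.inner_apply, RCLike.inner_apply]
  simp only [map_mul, RingHom.coe_coe, starRingEnd_apply]
  rw [star_star]
  ring

theorem star_apply (x : ℓ2 ι) (i : ι) :
    (star d.shiftCLM) x i = conj (d.c i) * x (d.f i) := by
  rw [d.star_shiftCLM]; rfl

end ShiftData

end Stmt14Aux

namespace Stmt14Aux

abbrev Idx (n m : ℕ) : Type := List (Fin n) × List (Fin m)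

variable (n m : ℕ) (q : ℂ)

def dS (j : Fin n) : ShiftData (Idx n m) where
  f p := (j :: p.1, p.2)
  g p := match p.1 with
    | [] => none
    | j' :: a => if j' = j then some (a, p.2) else none
  c _ := 1
  hgf i := by simp
  hfg := by
    rintro ⟨a, b⟩ i h
    cases a with
    | nil => exact absurd h (by simp)
    | cons j' a' =>
      by_cases hj : j' = j
      · simp only [hj, if_pos rfl] at h
        cases h
        simp [hj]
      · simp [hj] at h
  hc _ := norm_one

def dT (hq : ‖q‖ = 1) (r : Fin m) : ShiftData (Idx n m) where
  f p := (p.1, r :: p.2)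
  g p := match p.2 with
    | [] => none
    | r' :: b => if r' = r then some (p.1, b) else none
  c p := q ^ p.1.length
  hgf i := by simp
  hfg := by
    rintro ⟨a, b⟩ i h
    cases b with
    | nil => exact absurd h (by simp)
    | cons r' b' =>
      by_cases hr : r' = r
      · simp only [hr, if_pos rfl] at h
        cases h
        simp [hr]
      · simp [hr] at h
  hc p := by rw [norm_pow, hq, one_pow]

theorem conj_pow_mul (hq : ‖q‖ = 1) (k : ℕ) : conj (q ^ k) * q ^ k = 1 := by
  rw [RCLike.conj_mul, norm_pow, hq, one_pow]
  norm_num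

variable (hq : ‖q‖ = 1)

def SS (j : Fin n) : ℓ2 (Idx n m) →L[ℂ] ℓ2 (Idx n m) := (dS n m j).shiftCLM

def TT (r : Fin m) : ℓ2 (Idx n m) →L[ℂ] ℓ2 (Idx n m) := (dT n m q hq r).shiftCLM

theorem SS_apply_cons (x : ℓ2 (Idx n m)) (j j' : Fin n) (a : List (Fin n))
    (b : List (Fin m)) :
    SS n m j x (j' :: a, b) = if j' = j then x (a, b) else 0 := by
  rw [SS, (dS n m j).shiftCLM_apply]
  show (if j' = j then some (a, b) else none).elim 0 (fun i => 1 * x i) = _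
  by_cases h : j' = j <;> simp [h]

theorem SS_apply_nil (x : ℓ2 (Idx n m)) (j : Fin n) (b : List (Fin m)) :
    SS n m j x ([], b) = 0 := rfl

theorem SSstar_apply (x : ℓ2 (Idx n m)) (j : Fin n) (a : List (Fin n))
    (b : List (Fin m)) :
    star (SS n m j) x (a, b) = x (j :: a, b) := by
  rw [SS, (dS n m j).star_apply]
  show conj (1 : ℂ) * _ = _
  simp only [map_one, one_mul]
  rfl

theorem TT_apply_cons (x : ℓ2 (Idx n m)) (r r' : Fin m) (a : List (Fin n))
    (b : List (Fin m)) :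
    TT n m q hq r x (a, r' :: b) = if r' = r then q ^ a.length * x (a, b) else 0 := by
  rw [TT, (dT n m q hq r).shiftCLM_apply]
  show (if r' = r then some (a, b) else none).elim 0 (fun i => q ^ i.1.length * x i) = _
  by_cases h : r' = r <;> simp [h]

theorem TT_apply_nil (x : ℓ2 (Idx n m)) (r : Fin m) (a : List (Fin n)) :
    TT n m q hq r x (a, []) = 0 := rfl

theorem TTstar_apply (x : ℓ2 (Idx n m)) (r : Fin m) (a : List (Fin n))
    (b : List (Fin m)) :
    star (TT n m q hq r) x (a, b) = conj (q ^ a.length) * x (a, r :: b) := by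
  rw [TT, (dT n m q hq r).star_apply]
  rfl

end Stmt14Aux

namespace Stmt14Aux

variable (n m : ℕ) (q : ℂ) (hq : ‖q‖ = 1)

theorem rel1 (i j : Fin n) :
    star (SS n m i) * SS n m j = if i = j then (1 : ℓ2 (Idx n m) →L[ℂ] ℓ2 (Idx n m)) else 0 := by
  ext x p
  obtain ⟨a, b⟩ := p
  rw [ContinuousLinearMap.mul_apply, SSstar_apply, SS_apply_cons]
  by_cases h : i = j <;> simp [h]

theorem rel2 (r l : Fin m) :
    star (TT n m q hq r) * TT n m q hq l
      = if r = l then (1 : ℓ2 (Idx n m) →L[ℂ] ℓ2 (Idx n m)) else 0 := by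
  ext x p
  obtain ⟨a, b⟩ := p
  rw [ContinuousLinearMap.mul_apply, TTstar_apply, TT_apply_cons]
  by_cases h : r = l
  · subst h
    have h1 : (starRingEnd ℂ) q * q = 1 := by simpa using conj_pow_mul q hq 1
    simp [← mul_assoc, ← mul_pow, h1]
  · simp [h]

theorem rel3 (j : Fin n) (r : Fin m) :
    star (SS n m j) * TT n m q hq r = q • (TT n m q hq r * star (SS n m j)) := by
  ext x p
  obtain ⟨a, b⟩ := p
  rw [ContinuousLinearMap.mul_apply, SSstar_apply, ContinuousLinearMap.smul_apply,
    lp.coeFn_smul, Pi.smul_apply, smul_eq_mul, ContinuousLinearMap.mul_apply]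
  cases b with
  | nil => rw [TT_apply_nil, TT_apply_nil, mul_zero]
  | cons r' b' =>
    rw [TT_apply_cons, TT_apply_cons]
    by_cases h : r' = r
    · rw [if_pos h, if_pos h, SSstar_apply, List.length_cons, pow_succ]
      ring
    · rw [if_neg h, if_neg h, mul_zero]

theorem rel4 (r : Fin m) (j : Fin n) :
    TT n m q hq r * SS n m j = q • (SS n m j * TT n m q hq r) := by
  ext x p
  obtain ⟨a, b⟩ := p
  rw [ContinuousLinearMap.mul_apply, ContinuousLinearMap.smul_apply,
    lp.coeFn_smul, Pi.smul_apply, smul_eq_mul, ContinuousLinearMap.mul_apply]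
  cases b with
  | nil =>
    rw [TT_apply_nil]
    cases a with
    | nil => rw [SS_apply_nil, mul_zero]
    | cons j' a' =>
      rw [SS_apply_cons, TT_apply_nil]
      by_cases h : j' = j <;> simp [h]
  | cons r' b' =>
    rw [TT_apply_cons]
    cases a with
    | nil =>
      rw [SS_apply_nil, SS_apply_nil, mul_zero]
      simp
    | cons j' a' =>
      rw [SS_apply_cons, SS_apply_cons, TT_apply_cons]
      by_cases h : j' = j
      · by_cases h' : r' = r
        · rw [if_pos h, if_pos h', if_pos h, if_pos h', List.length_cons, pow_succ]
          ring
        · rw [if_pos h, if_neg h', if_pos h, if_neg h']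
          simp
      · rw [if_neg h, if_neg h]
        simp

def Om : ℓ2 (Idx n m) := lp.single 2 (([], []) : Idx n m) (1 : ℂ)

theorem norm_Om : ‖Om n m‖ = 1 := by
  have := lp.norm_single (E := fun _ : Idx n m => ℂ) (p := 2) (by norm_num)
    (([], []) : Idx n m) (1 : ℂ)
  simpa [Om] using this

theorem SSstar_Om (j : Fin n) : star (SS n m j) (Om n m) = 0 := by
  apply lp.ext
  funext p
  obtain ⟨a, b⟩ := p
  rw [SSstar_apply]
  show Om n m (j :: a, b) = (0 : ℓ2 (Idx n m)) (a, b)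
  rw [Om, lp.single_apply, Pi.single_eq_of_ne (by simp)]
  simp

theorem TTstar_Om (r : Fin m) : star (TT n m q hq r) (Om n m) = 0 := by
  apply lp.ext
  funext p
  obtain ⟨a, b⟩ := p
  rw [TTstar_apply]
  have : Om n m (a, r :: b) = 0 := by
    rw [Om, lp.single_apply, Pi.single_eq_of_ne (by simp)]
  rw [this, mul_zero]
  simp

end Stmt14Aux

/-- existence of a Fock-type representation: there are a nontrivial
Hilbert space `H`, bounded operators `S_j, T_r` on `H`, and a unit vector `Ω`
satisfying the `q`-deformed relations and killed by all `S_j^*, T_r^*`. -/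
theorem stmt14 (n m : ℕ) (hn : 1 ≤ n) (hm : 1 ≤ m) (q : ℂ) (hq : ‖q‖ = 1) :
    ∃ (H : Type) (_ : NormedAddCommGroup H) (_ : InnerProductSpace ℂ H)
      (_ : CompleteSpace H) (S : Fin n → H →L[ℂ] H) (T : Fin m → H →L[ℂ] H)
      (Ω : H),
      ‖Ω‖ = 1 ∧
      (∀ i j, star (S i) * S j = if i = j then 1 else 0) ∧
      (∀ r l, star (T r) * T l = if r = l then 1 else 0) ∧
      (∀ j r, star (S j) * T r = q • (T r * star (S j))) ∧
      (∀ r j, T r * S j = q • (S j * T r)) ∧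
      (∀ j, star (S j) Ω = 0) ∧
      (∀ r, star (T r) Ω = 0) := by
  classical
  exact ⟨Stmt14Aux.ℓ2 (Stmt14Aux.Idx n m), inferInstance, inferInstance, inferInstance,
    fun j => Stmt14Aux.SS n m j, fun r => Stmt14Aux.TT n m q hq r, Stmt14Aux.Om n m,
    Stmt14Aux.norm_Om n m, Stmt14Aux.rel1 n m, Stmt14Aux.rel2 n m q hq,
    Stmt14Aux.rel3 n m q hq, Stmt14Aux.rel4 n m q hq,
    Stmt14Aux.SSstar_Om n m, Stmt14Aux.TTstar_Om n m q hq⟩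
end
end

section
/- Let k ≥ 1, set s_γ := s_1^{2k} s_2, t_γ := t_1^{2k} t_2, w_{k,1} := ∑_{|δ|=k} s_δ s_γ s_δ^* (sum over words δ in {1,…,n} of length k), and w_{k,2} := ∑_{|λ|=k} t_λ t_γ t_λ^* (sum over words λ in {1,…,m} of length k). Then w_{k,2}·w_{k,1} = q^{(2k+1)²}·w_{k,1}·w_{k,2} and w_{k,2}^*·w_{k,1} = q^{−(2k+1)²}·w_{k,1}·w_{k,2}^* (integer powers of q in ℂ). -/
open scoped BigOperators

noncomputable section

variable {A : Type*} [NormedRing A] [StarRing A] [CStarRing A]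
  [NormedAlgebra ℂ A] [StarModule ℂ A] [CompleteSpace A]

namespace Stmt16Aux

def PComm {n : ℕ} (s : Fin n → A) (c : ℂ) (x : A) : Prop :=
  (∀ j, x * s j = c • (s j * x)) ∧ (∀ j, star (s j) * x = c • (x * star (s j)))

lemma PComm.one {n : ℕ} (s : Fin n → A) : PComm s 1 (1 : A) := by
  constructor <;> intro j <;> simp

lemma PComm.mul {n : ℕ} {s : Fin n → A} {c d : ℂ} {x y : A}
    (hx : PComm s c x) (hy : PComm s d y) : PComm s (c * d) (x * y) := by
  constructor
  · intro j
    rw [mul_assoc, hy.1 j, mul_smul_comm, ← mul_assoc, hx.1 j]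
    simp only [smul_mul_assoc, smul_smul, mul_assoc]
    rw [mul_comm d c]
  · intro j
    rw [← mul_assoc, hx.2 j, smul_mul_assoc, mul_assoc, hy.2 j]
    simp only [mul_smul_comm, smul_smul, mul_assoc]

lemma PComm.star' {n : ℕ} {s : Fin n → A} {c : ℂ} {x : A}
    (hx : PComm s c x) : PComm s (star c) (star x) := by
  constructor
  · intro j
    have := congrArg star (hx.2 j)
    simpa [star_mul, star_smul, mul_comm] using this
  · intro j
    have := congrArg star (hx.1 j)
    simpa [star_mul, star_smul] using this

lemma PComm.pow {n : ℕ} {s : Fin n → A} {c : ℂ} {x : A}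
    (hx : PComm s c x) (p : ℕ) : PComm s (c ^ p) (x ^ p) := by
  induction p with
  | zero => simpa using PComm.one s
  | succ p ih => simpa [pow_succ] using ih.mul hx

lemma sProd_succ {n k : ℕ} (s : Fin n → A) (δ : Fin (k + 1) → Fin n) :
    sProd s δ = s (δ 0) * sProd s (fun i => δ i.succ) := by
  simp [sProd, List.ofFn_succ]

lemma PComm.sProd {n m : ℕ} {s : Fin n → A} {t : Fin m → A} {c : ℂ}
    (hbase : ∀ r, PComm s c (t r)) :
    ∀ {k : ℕ} (δ : Fin k → Fin m), PComm s (c ^ k) (sProd t δ) := by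
  intro k
  induction k with
  | zero => intro δ; simpa [_root_.sProd] using PComm.one s
  | succ p ih =>
      intro δ
      rw [sProd_succ]
      simpa [pow_succ, mul_comm] using (hbase (δ 0)).mul (ih fun i => δ i.succ)

lemma comm_pow {c : ℂ} {x b : A} (h : x * b = c • (b * x)) (p : ℕ) :
    x * b ^ p = c ^ p • (b ^ p * x) := by
  induction p with
  | zero => simp
  | succ p ih =>
      rw [pow_succ, ← mul_assoc, ih, smul_mul_assoc, mul_assoc, h]
      simp only [mul_smul_comm, smul_smul, mul_assoc, pow_succ]

lemma left_prod {n : ℕ} {s : Fin n → A} {c : ℂ} {x : A} (hx : PComm s c x) :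
    ∀ {k : ℕ} (δ : Fin k → Fin n), x * sProd s δ = c ^ k • (sProd s δ * x) := by
  intro k
  induction k with
  | zero => intro δ; simp [sProd]
  | succ p ih =>
      intro δ
      rw [sProd_succ, ← mul_assoc, hx.1 (δ 0), smul_mul_assoc, mul_assoc,
        ih fun i => δ i.succ, mul_smul_comm, smul_smul, pow_succ, mul_comm (c ^ p) c,
        mul_assoc]

lemma star_prod {n : ℕ} {s : Fin n → A} {c : ℂ} {x : A} (hx : PComm s c x) :
    ∀ {k : ℕ} (δ : Fin k → Fin n), star (sProd s δ) * x = c ^ k • (x * star (sProd s δ)) := by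
  intro k
  induction k with
  | zero => intro δ; simp [sProd]
  | succ p ih =>
      intro δ
      rw [sProd_succ, star_mul, mul_assoc, hx.2 (δ 0), mul_smul_comm, ← mul_assoc,
        ih fun i => δ i.succ, smul_mul_assoc, smul_smul, pow_succ, mul_comm (c ^ p) c,
        mul_assoc]

lemma comm_term {n : ℕ} {s : Fin n → A} {c : ℂ} (hc : c ≠ 0) {x : A} (hx : PComm s c x)
    {k : ℕ} (δ : Fin k → Fin n) {g : A} (hg : x * g = c ^ (2 * k + 1) • (g * x)) :
    x * (sProd s δ * g * star (sProd s δ)) =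
      c ^ (2 * k + 1) • (sProd s δ * g * star (sProd s δ) * x) := by
  have hP' : x * star (sProd s δ) = (c ^ k)⁻¹ • (star (sProd s δ) * x) := by
    rw [star_prod hx δ, smul_smul, inv_mul_cancel₀ (pow_ne_zero k hc), one_smul]
  calc x * (sProd s δ * g * star (sProd s δ))
      = (x * sProd s δ) * g * star (sProd s δ) := by rw [← mul_assoc, ← mul_assoc]
    _ = c ^ k • (sProd s δ * (x * g) * star (sProd s δ)) := by
        rw [left_prod hx δ, smul_mul_assoc, smul_mul_assoc, mul_assoc (sProd s δ)]
    _ = (c ^ k * c ^ (2 * k + 1)) • (sProd s δ * g * (x * star (sProd s δ))) := by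
        rw [hg, mul_smul_comm, smul_mul_assoc, smul_smul, mul_assoc (sProd s δ),
          mul_assoc (sProd s δ), mul_assoc g]
    _ = (c ^ k * c ^ (2 * k + 1) * (c ^ k)⁻¹) • (sProd s δ * g * star (sProd s δ) * x) := by
        rw [hP']
        simp only [mul_smul_comm, smul_smul, mul_assoc]
    _ = c ^ (2 * k + 1) • (sProd s δ * g * star (sProd s δ) * x) := by
        simp only [mul_assoc]
        congr 1
        field_simp

end Stmt16Aux

open Stmt16Aux in
/-- with `w_{k,1} = ∑_{|δ|=k} s_δ s_γ s_δ^*` and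
`w_{k,2} = ∑_{|λ|=k} t_λ t_γ t_λ^*`, one has `w_{k,2} w_{k,1} = q^{(2k+1)²} w_{k,1} w_{k,2}`
and `w_{k,2}^* w_{k,1} = q^{−(2k+1)²} w_{k,1} w_{k,2}^*`. -/
theorem stmt16 {n m : ℕ} (hn : 2 ≤ n) (hm : 2 ≤ m) (q : ℂ) (hq : ‖q‖ = 1)
    (s : Fin n → A) (t : Fin m → A)
    (hs : ∀ i j, star (s i) * s j = if i = j then 1 else 0)
    (hs1 : ∑ i : Fin n, s i * star (s i) = 1)
    (ht : ∀ r l, star (t r) * t l = if r = l then 1 else 0)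
    (ht1 : ∑ r : Fin m, t r * star (t r) = 1)
    (hst : ∀ j r, star (s j) * t r = q • (t r * star (s j)))
    (hts : ∀ r j, t r * s j = q • (s j * t r))
    (k : ℕ) (hk : 1 ≤ k)
    (sγ : A) (hsγ : sγ = (s ⟨0, by omega⟩) ^ (2 * k) * s ⟨1, by omega⟩)
    (tγ : A) (htγ : tγ = (t ⟨0, by omega⟩) ^ (2 * k) * t ⟨1, by omega⟩)
    (w₁ : A) (hw₁ : w₁ = ∑ δ : Fin k → Fin n, sProd s δ * sγ * star (sProd s δ))
    (w₂ : A) (hw₂ : w₂ = ∑ lam : Fin k → Fin m, sProd t lam * tγ * star (sProd t lam)) :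
    w₂ * w₁ = q ^ ((2 * (k : ℤ) + 1) ^ 2) • (w₁ * w₂) ∧
    star w₂ * w₁ = q ^ (-((2 * (k : ℤ) + 1) ^ 2)) • (w₁ * star w₂) := by
  have hq0 : q ≠ 0 := by
    intro h; rw [h] at hq; simp at hq
  have h1 : q * star q = 1 := by
    have : q * star q = (‖q‖ : ℂ) ^ 2 := by
      rw [show (star q : ℂ) = (starRingEnd ℂ) q from rfl, Complex.mul_conj,
        Complex.normSq_eq_norm_sq]
      push_cast; ring
    rw [this, hq]; norm_num
  have hconj : (star q : ℂ) = q⁻¹ := eq_inv_of_mul_eq_one_right (by rw [mul_comm] at h1 ⊢; exact h1)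
  have hT : ∀ r, PComm s q (t r) := fun r => ⟨fun j => hts r j, fun j => hst j r⟩
  set VT : (Fin k → Fin m) → A := fun lam => sProd t lam * tγ * star (sProd t lam) with hVT
  have hv : ∀ lam, PComm s (q ^ (2 * k + 1)) (VT lam) := by
    intro lam
    have h2 : PComm s (q ^ (2 * k) * q) tγ := by
      rw [htγ]; exact (PComm.pow (hT _) (2 * k)).mul (hT _)
    have h3 := ((PComm.sProd hT lam).mul h2).mul (PComm.star' (PComm.sProd hT lam))
    have hsc : q ^ k * (q ^ (2 * k) * q) * star (q ^ k) = q ^ (2 * k + 1) := by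
      rw [star_pow, hconj, inv_pow, mul_comm, ← mul_assoc, inv_mul_cancel₀ (pow_ne_zero k hq0),
        one_mul, pow_succ]
    exact hsc ▸ h3
  have key : ∀ (c : ℂ), c ≠ 0 → ∀ v : A, PComm s c v →
      v * w₁ = c ^ (2 * k + 1) • (w₁ * v) := by
    intro c hc v hvv
    rw [hw₁, Finset.sum_mul, Finset.mul_sum, Finset.smul_sum]
    refine Finset.sum_congr rfl fun δ _ => ?_
    refine comm_term hc hvv δ ?_
    rw [hsγ, ← mul_assoc, comm_pow (hvv.1 _) (2 * k), smul_mul_assoc, mul_assoc, hvv.1 _]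
    simp only [mul_smul_comm, smul_smul, mul_assoc, pow_succ]
  have hexp : ((2 * (k : ℤ) + 1) ^ 2) = (((2 * k + 1) * (2 * k + 1) : ℕ) : ℤ) := by
    push_cast; ring
  constructor
  · calc w₂ * w₁ = ∑ lam : Fin k → Fin m, VT lam * w₁ := by rw [hw₂, Finset.sum_mul]
      _ = ∑ lam : Fin k → Fin m, (q ^ (2 * k + 1)) ^ (2 * k + 1) • (w₁ * VT lam) :=
          Finset.sum_congr rfl fun lam _ =>
            key _ (pow_ne_zero _ hq0) _ (hv lam)
      _ = (q ^ (2 * k + 1)) ^ (2 * k + 1) • (w₁ * w₂) := by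
          rw [← Finset.smul_sum, ← Finset.mul_sum, ← hw₂]
      _ = q ^ ((2 * (k : ℤ) + 1) ^ 2) • (w₁ * w₂) := by
          rw [hexp, zpow_natCast, ← pow_mul]
  · have hv' : ∀ lam, PComm s ((q⁻¹) ^ (2 * k + 1)) (star (VT lam)) := by
      intro lam
      have := PComm.star' (hv lam)
      rwa [star_pow, hconj] at this
    have hw₂' : star w₂ = ∑ lam : Fin k → Fin m, star (VT lam) := by
      rw [hw₂, star_sum]
    calc star w₂ * w₁ = ∑ lam : Fin k → Fin m, star (VT lam) * w₁ := by
          rw [hw₂', Finset.sum_mul]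
      _ = ∑ lam : Fin k → Fin m, ((q⁻¹) ^ (2 * k + 1)) ^ (2 * k + 1) • (w₁ * star (VT lam)) :=
          Finset.sum_congr rfl fun lam _ =>
            key _ (pow_ne_zero _ (inv_ne_zero hq0)) _ (hv' lam)
      _ = ((q⁻¹) ^ (2 * k + 1)) ^ (2 * k + 1) • (w₁ * star w₂) := by
          rw [← Finset.smul_sum, ← Finset.mul_sum, ← hw₂']
      _ = q ^ (-((2 * (k : ℤ) + 1) ^ 2)) • (w₁ * star w₂) := by
          rw [hexp, zpow_neg, zpow_natCast, ← pow_mul, ← inv_pow]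
end
end

section
/- Let H be a complex Hilbert space, q ∈ ℂ with |q| = 1, and let S_1,…,S_n, T_1,…,T_m be bounded operators on H satisfying S_i^* S_j = δ_{ij}·I, T_r^* T_l = δ_{rl}·I, S_j^* T_r = q·T_r S_j^*, and T_r S_j = q·S_j T_r for all indices. Set Q := ∑_{j=1}^n S_j S_j^* and K := ker Q. Then K is invariant under each T_r and each T_r^*, and for every ξ ∈ K, every word λ in {1,…,n}, and every 1 ≤ r ≤ m one has T_r S_λ ξ = q^{|λ|}·S_λ T_r ξ, where S_λ denotes the product S_{λ_1}⋯S_{λ_k} for λ = (λ_1,…,λ_k) and |λ| := k. -/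
open scoped BigOperators

noncomputable section

/-- for operators `S_j, T_r` on a Hilbert space satisfying the
`q`-deformed relations, `K := ker Q` (with `Q = ∑_j S_j S_j^*`) is invariant
under every `T_r` and `T_r^*`, and `T_r S_λ ξ = q^{|λ|} S_λ T_r ξ` for `ξ ∈ K`. -/
theorem stmt19 {H : Type*} [NormedAddCommGroup H] [InnerProductSpace ℂ H]
    [CompleteSpace H] {n m : ℕ} (q : ℂ) (hq : ‖q‖ = 1)
    (S : Fin n → H →L[ℂ] H) (T : Fin m → H →L[ℂ] H)
    (hS : ∀ i j, star (S i) * S j = if i = j then 1 else 0)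
    (hT : ∀ r l, star (T r) * T l = if r = l then 1 else 0)
    (hST : ∀ j r, star (S j) * T r = q • (T r * star (S j)))
    (hTS : ∀ r j, T r * S j = q • (S j * T r))
    (Q : H →L[ℂ] H) (hQ : Q = ∑ j : Fin n, S j * star (S j)) :
    (∀ (r : Fin m), ∀ ξ ∈ LinearMap.ker (Q : H →ₗ[ℂ] H),
      T r ξ ∈ LinearMap.ker (Q : H →ₗ[ℂ] H) ∧ star (T r) ξ ∈ LinearMap.ker (Q : H →ₗ[ℂ] H)) ∧
    (∀ (r : Fin m), ∀ ξ ∈ LinearMap.ker (Q : H →ₗ[ℂ] H), ∀ lam : List (Fin n),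
      T r ((lam.map S).prod ξ) = q ^ lam.length • (lam.map S).prod (T r ξ)) := by
  have hQT : ∀ r, Q * T r = T r * Q := by
    intro r
    rw [hQ, Finset.sum_mul, Finset.mul_sum]
    refine Finset.sum_congr rfl fun j _ => ?_
    rw [mul_assoc, hST j r, ← mul_assoc, hTS r j]
    simp [mul_smul_comm, smul_mul_assoc, mul_assoc]
  have hQTs : ∀ r, Q * star (T r) = star (T r) * Q := by
    intro r
    have h1 : ∀ j, star (S j) * star (T r)
        = (star q) • (star (T r) * star (S j)) := by
      intro j
      have h := congrArg star (hTS r j)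
      rw [star_mul, star_smul, star_mul] at h
      exact h
    have h2 : ∀ j, star (T r) * S j
        = (star q) • (S j * star (T r)) := by
      intro j
      have h := congrArg star (hST j r)
      rw [star_mul, star_smul, star_mul, star_star] at h
      simpa using h
    rw [hQ, Finset.sum_mul, Finset.mul_sum]
    refine Finset.sum_congr rfl fun j _ => ?_
    rw [mul_assoc, h1 j, ← mul_assoc, h2 j]
    simp [mul_smul_comm, smul_mul_assoc, mul_assoc]
  have hword : ∀ r (lam : List (Fin n)),
      T r * (lam.map S).prod = q ^ lam.length • ((lam.map S).prod * T r) := by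
    intro r lam
    induction lam with
    | nil => simp
    | cons j rest ih =>
      simp only [List.map_cons, List.prod_cons, List.length_cons]
      rw [← mul_assoc, hTS r j, smul_mul_assoc, mul_assoc, ih]
      rw [mul_smul_comm, smul_smul, pow_succ, ← mul_assoc]
      ring_nf
  constructor
  · intro r ξ hξ
    have hξ0 : Q ξ = 0 := hξ
    constructor
    · have : Q (T r ξ) = (Q * T r) ξ := rfl
      simp only [LinearMap.mem_ker, ContinuousLinearMap.coe_coe] at *
      rw [show Q (T r ξ) = (Q * T r) ξ from rfl, hQT r,
        ContinuousLinearMap.mul_apply, hξ0, map_zero]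
    · simp only [LinearMap.mem_ker, ContinuousLinearMap.coe_coe] at *
      rw [show Q (star (T r) ξ) = (Q * star (T r)) ξ from rfl, hQTs r,
        ContinuousLinearMap.mul_apply, hξ0, map_zero]
  · intro r ξ _ lam
    have := congrArg (fun (A : H →L[ℂ] H) => A ξ) (hword r lam)
    simpa [ContinuousLinearMap.mul_apply] using this
end
end
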